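/- Let q ≥ 1, m ≥ 3, and Σ = {x_1, …, x_q}. The set S = ⋃_{i=1}^q {x_i^m, x_i^{m+1}} ∪ ⋃_{i ≠ j} {x_i x_j^{m−1}, x_j^{m−1} x_i} over Σ has cardinality 2q², its shortest words have length m, and its iterated shuffle S^† is co-finite. -/

import Mathlib

/-- `Shuffle u v w` means that the word `w` is an interleaving (shuffle) of the
words `u` and `v`. -/
inductive Shuffle {α : Type*} : List α → List α → List α → Prop
  | nil : Shuffle [] [] []
  | left {a : α} {u v w : List α} : Shuffle u v w → Shuffle (a :: u) v (a :: w)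
  | right {a : α} {u v w : List α} : Shuffle u v w → Shuffle u (a :: v) (a :: w)

/-- `IterShuffle S y` means `y` belongs to the iterated shuffle `S^†`, i.e. `y`
can be obtained by shuffling together finitely many (possibly zero) words of `S`. -/
inductive IterShuffle {α : Type*} (S : Set (List α)) : List α → Prop
  | nil : IterShuffle S []
  | step {u w y : List α} : u ∈ S → IterShuffle S w → Shuffle u w y → IterShuffle S y

/-!
For `m ≥ 3` a word of `S` is determined by its length and its first, second and last letters,
so the `2q²` parameters `(i, j, b)` give distinct words.

For co-finiteness, split off words of `S` from a long word greedily. Some letter `j` occurs very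
often. While another letter `i` occurs at least `m` times, split off a scattered subword `iᵐ`.
Then the other letters occur fewer than `m` times each, and each of them can be split off
together with `m - 1` copies of `j` on one side of it, as `i j^{m-1}` or `j^{m-1} i`. What remains
is `jⁿ` with `n ≥ m(m - 1)`, and every such `n` is a sum of `m`s and `(m + 1)`s.
-/

open List Function

variable {α : Type*}

theorem Shuffle.nil_left (v : List α) : Shuffle [] v v := by
  induction v with
  | nil => exact .nil
  | cons _ _ ih => exact .right ih

theorem Shuffle.append (u v : List α) : Shuffle u v (u ++ v) := by
  induction u with
  | nil => exact .nil_left v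
  | cons _ _ ih => exact .left ih

theorem Shuffle.perm {u v w : List α} (h : Shuffle u v w) : w ~ u ++ v := by
  induction h with
  | nil => rfl
  | left _ ih => exact ih.cons _
  | right _ ih => exact (ih.cons _).trans perm_middle.symm

theorem List.Sublist.exists_shuffle {u w : List α} (h : u <+ w) : ∃ v, Shuffle u v w := by
  induction h with
  | slnil => exact ⟨[], .nil⟩
  | cons _ _ ih => obtain ⟨v, hv⟩ := ih; exact ⟨_, .right hv⟩
  | cons_cons _ _ ih => obtain ⟨v, hv⟩ := ih; exact ⟨v, .left hv⟩

namespace IterShuffle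

variable {S : Set (List α)} {u w : List α}

theorem append_of_mem (hu : u ∈ S) (hw : IterShuffle S w) : IterShuffle S (u ++ w) :=
  .step hu hw (.append u w)

theorem of_sublist (hu : u ∈ S) (huw : u <+ w) (h : ∀ v, w ~ u ++ v → IterShuffle S v) :
    IterShuffle S w :=
  let ⟨v, hv⟩ := huw.exists_shuffle
  .step hu (h v hv.perm) hv

end IterShuffle

theorem Nat.exists_mul_add_mul_succ_eq {m n : ℕ} (hm : 0 < m) (hn : m * (m - 1) ≤ n) :
    ∃ a b, a * m + b * (m + 1) = n := by
  have hr : n % m ≤ n / m := by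
    have := Nat.mod_lt n hm
    have : m - 1 ≤ n / m := (Nat.le_div_iff_mul_le hm).2 (by rw [mul_comm]; exact hn)
    omega
  refine ⟨n / m - n % m, n % m, ?_⟩
  -- `n = (n / m) * m + n % m = (n / m - n % m) * m + (n % m) * (m + 1)`
  zify [hr]
  have := Nat.div_add_mod n m
  zify at this
  linarith

theorem List.exists_sublist_of_two_mul_le_count [DecidableEq α] {w : List α} {i j : α} {n : ℕ}
    (hi : i ∈ w) (hij : i ≠ j) (h : 2 * n ≤ w.count j) :
    i :: replicate n j <+ w ∨ replicate n j ++ [i] <+ w := by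
  obtain ⟨s, t, rfl⟩ := append_of_mem hi
  rw [count_append, count_cons_of_ne hij] at h
  by_cases hs : n ≤ s.count j
  · exact .inr ((replicate_sublist_iff.2 hs).append (singleton_sublist.2 mem_cons_self))
  · exact .inl (((replicate_sublist_iff.2 (by omega)).cons_cons i).trans
      (sublist_append_right s _))

theorem List.sum_count_eq_length [DecidableEq α] [Fintype α] (w : List α) :
    ∑ i, w.count i = w.length := by
  simpa using Multiset.sum_count_eq_card (s := Finset.univ) (m := (w : Multiset α)) (by simp)

theorem List.length_le_count_add_of_count_le [DecidableEq α] [Fintype α] {w : List α} {j : α}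
    {n : ℕ} (h : ∀ i ≠ j, w.count i ≤ n) :
    w.length ≤ w.count j + (Fintype.card α - 1) * n := by
  rw [← w.sum_count_eq_length, ← Finset.add_sum_erase _ _ (Finset.mem_univ j)]
  gcongr
  calc ∑ i ∈ Finset.univ.erase j, w.count i ≤ ∑ _i ∈ Finset.univ.erase j, n :=
        Finset.sum_le_sum fun i hi => h i (Finset.ne_of_mem_erase hi)
    _ = (Fintype.card α - 1) * n := by simp [Finset.card_erase_of_mem]

section Proto

variable [DecidableEq α]

def protoWord (m : ℕ) : α × α × Bool → List α
  | (i, j, false) => if i = j then replicate m i else i :: replicate (m - 1) j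
  | (i, j, true) => if i = j then replicate (m + 1) i else replicate (m - 1) j ++ [i]

variable {m : ℕ} {S : Set (List α)}

theorem IterShuffle.replicate_mul_add_mul_succ (hS : Set.range (protoWord m) ⊆ S) (i : α)
    (a b : ℕ) : IterShuffle S (replicate (a * m + b * (m + 1)) i) := by
  induction a with
  | zero =>
    induction b with
    | zero => simpa using .nil
    | succ b ih =>
      rw [show 0 * m + (b + 1) * (m + 1) = (m + 1) + (0 * m + b * (m + 1)) by ring, replicate_add]
      exact .append_of_mem (hS ⟨(i, i, true), by simp [protoWord]⟩) ih
  | succ a ih =>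
    rw [show (a + 1) * m + b * (m + 1) = m + (a * m + b * (m + 1)) by ring, replicate_add]
    exact .append_of_mem (hS ⟨(i, i, false), by simp [protoWord]⟩) ih

theorem IterShuffle.replicate_of_mul_pred_le (hm : 0 < m) (hS : Set.range (protoWord m) ⊆ S)
    (i : α) {n : ℕ} (hn : m * (m - 1) ≤ n) : IterShuffle S (replicate n i) := by
  obtain ⟨a, b, rfl⟩ := Nat.exists_mul_add_mul_succ_eq hm hn
  exact .replicate_mul_add_mul_succ hS i a b

theorem IterShuffle.of_count_dominant (hm : 0 < m) (hS : Set.range (protoWord m) ⊆ S)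
    {w : List α} {j : α} (h : (m - 1) * (w.length - w.count j) + m * (m - 1) ≤ w.count j) :
    IterShuffle S w := by
  induction hk : w.length - w.count j generalizing w with
  | zero =>
    rw [hk, mul_zero, zero_add] at h
    have hlen : w.count j = w.length := by have := w.count_le_length (a := j); omega
    rw [eq_replicate_of_mem fun b hb => ((count_eq_length.1 hlen) b hb).symm]
    exact .replicate_of_mul_pred_le hm hS j (by omega)
  | succ k ih =>
    obtain ⟨i, hi, hij⟩ : ∃ i ∈ w, i ≠ j := by
      by_contra! hw
      have := count_eq_length.2 fun b hb => (hw b hb).symm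
      omega
    rw [hk, mul_add_one] at h
    have hcount : 2 * (m - 1) ≤ w.count j := by
      have : m - 1 ≤ m * (m - 1) := Nat.le_mul_of_pos_left _ hm
      omega
    obtain ⟨b, hsub⟩ : ∃ b, protoWord m (i, j, b) <+ w := by
      rcases exists_sublist_of_two_mul_le_count hi hij hcount with hsub | hsub
      exacts [⟨false, by simpa [protoWord, hij]⟩, ⟨true, by simpa [protoWord, hij]⟩]
    have hcu : (protoWord m (i, j, b)).count j = m - 1 := by cases b <;> simp [protoWord, hij]
    have hlu : (protoWord m (i, j, b)).length = m := by
      cases b <;> simp [protoWord, hij] <;> omega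
    refine .of_sublist (hS ⟨_, rfl⟩) hsub fun v hv => ?_
    have hc := hv.count_eq j
    have hl := hv.length_eq
    rw [count_append] at hc
    rw [length_append] at hl
    have hvk : v.length - v.count j = k := by omega
    exact ih (by rw [hvk]; omega) hvk

end Proto

section Cofinite

variable [DecidableEq α] [Fintype α] {m : ℕ} {S : Set (List α)}

theorem IterShuffle.of_le_count (hm : 0 < m) (hS : Set.range (protoWord m) ⊆ S) {w : List α}
    {j : α} (h : (m - 1) * ((Fintype.card α - 1) * (m - 1)) + m * (m - 1) ≤ w.count j) :
    IterShuffle S w := by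
  induction hn : w.length using Nat.strong_induction_on generalizing w with
  | _ n ih =>
  by_cases hlarge : ∃ i ≠ j, m ≤ w.count i
  · obtain ⟨i, hij, hi⟩ := hlarge
    have hsub : protoWord m (i, i, false) <+ w := by
      simpa [protoWord] using replicate_sublist_iff.2 hi
    refine .of_sublist (hS ⟨_, rfl⟩) hsub fun v hv => ?_
    have hc := hv.count_eq j
    have hl := hv.length_eq
    simp only [protoWord, if_true, count_append, count_replicate, beq_iff_eq, hij, if_false,
      length_append, length_replicate] at hc hl
    exact ih v.length (by omega) (by omega) rfl
  · push Not at hlarge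
    have hlen := length_le_count_add_of_count_le (w := w) (j := j) (n := m - 1) fun i hi => by
      have := hlarge i hi; omega
    refine .of_count_dominant hm hS (j := j) (le_trans ?_ h)
    gcongr
    omega

theorem finite_setOf_not_iterShuffle (hm : 0 < m) (hS : Set.range (protoWord m) ⊆ S) :
    {w : List α | ¬ IterShuffle S w}.Finite := by
  set D := (m - 1) * ((Fintype.card α - 1) * (m - 1)) + m * (m - 1)
  refine (List.finite_length_le α (Fintype.card α * D)).subset fun w hw => ?_
  have hcount : ∀ i, w.count i ≤ D := fun i => by
    by_contra! hi
    exact hw (.of_le_count hm hS hi.le)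
  calc w.length = ∑ i, w.count i := w.sum_count_eq_length.symm
    _ ≤ ∑ _i : α, D := Finset.sum_le_sum fun i _ => hcount i
    _ = Fintype.card α * D := by simp

end Cofinite

section Card

variable [DecidableEq α] {m : ℕ}

theorem protoWord_injective (hm : 3 ≤ m) : Injective (protoWord (α := α) m) := by
  obtain ⟨k, rfl⟩ : ∃ k, m = k + 3 := ⟨m - 3, by omega⟩
  -- the second letter of a mixed word is `j` since `m - 1 ≥ 2`
  rintro ⟨i, j, _ | _⟩ ⟨i', j', _ | _⟩ h <;>
    have hl := congrArg length h <;> have hh := congrArg head? h <;>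
    have hs := congrArg (·[1]?) h <;> have ht := congrArg getLast? h <;>
    by_cases hij : i = j <;> by_cases hij' : i' = j' <;>
    simp only [protoWord, hij, hij', if_true, if_false] at hl hh hs ht ⊢ <;>
    simp_all [getLast?_eq_getElem?, head?_replicate]

theorem le_length_protoWord (p : α × α × Bool) : m ≤ (protoWord m p).length := by
  rcases p with ⟨i, j, _ | _⟩ <;> by_cases hij : i = j <;> simp [protoWord, hij] <;> omega

theorem range_protoWord :
    Set.range (protoWord (α := α) m) =
      {w | ∃ i, w = replicate m i ∨ w = replicate (m + 1) i} ∪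
        {w | ∃ i j, i ≠ j ∧ (w = i :: replicate (m - 1) j ∨ w = replicate (m - 1) j ++ [i])} := by
  ext w
  constructor
  · rintro ⟨⟨i, j, _ | _⟩, rfl⟩ <;> by_cases hij : i = j <;>
      simp only [protoWord, hij, if_true, if_false]
    exacts [.inl ⟨j, .inl rfl⟩, .inr ⟨i, j, hij, .inl rfl⟩, .inl ⟨j, .inr rfl⟩,
      .inr ⟨i, j, hij, .inr rfl⟩]
  · rintro (⟨i, rfl | rfl⟩ | ⟨i, j, hij, rfl | rfl⟩)
    exacts [⟨(i, i, false), by simp [protoWord]⟩, ⟨(i, i, true), by simp [protoWord]⟩,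
      ⟨(i, j, false), by simp [protoWord, hij]⟩, ⟨(i, j, true), by simp [protoWord, hij]⟩]

end Card

/-- For `q ≥ 1` and `m ≥ 3`, the set
`S = ⋃ᵢ {xᵢ^m, xᵢ^{m+1}} ∪ ⋃_{i ≠ j} {xᵢxⱼ^{m-1}, xⱼ^{m-1}xᵢ}` over a `q`-letter
alphabet has cardinality `2q²`, its shortest words have length `m`, and its
iterated shuffle is co-finite. -/
theorem proto_m_ge_three_tight (q m : ℕ) (hq : 1 ≤ q) (hm : 3 ≤ m)
    (S : Set (List (Fin q)))
    (hS : S = {w | ∃ i : Fin q, w = List.replicate m i ∨ w = List.replicate (m + 1) i} ∪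
              {w | ∃ i j : Fin q, i ≠ j ∧
                (w = i :: List.replicate (m - 1) j ∨
                 w = List.replicate (m - 1) j ++ [i])}) :
    S.ncard = 2 * q ^ 2 ∧
    (∃ w ∈ S, w.length = m) ∧ (∀ w ∈ S, m ≤ w.length) ∧
    {w : List (Fin q) | ¬ IterShuffle S w}.Finite := by
  rw [← range_protoWord] at hS
  subst hS
  refine ⟨?card, ?shortest, ?lengths, finite_setOf_not_iterShuffle (by omega) subset_rfl⟩
  case card =>
    rw [Set.ncard_range_of_injective (protoWord_injective hm)]
    simp [sq]
    ring
  case shortest =>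
    let i : Fin q := ⟨0, hq⟩
    exact ⟨_, ⟨(i, i, false), rfl⟩, by simp [protoWord]⟩
  case lengths =>
    rintro _ ⟨p, rfl⟩
    exact le_length_protoWord p
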